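/- Let V be a real normed vector space, let p be a seminorm on the real vector space of all functions from ℝ to V, and let u : ℝ → V be a smooth function. Suppose ρ > 0 and C > 0 are constants such that for every n ∈ ℕ, p( t ↦ t^n · (d^n u/dt^n)(t) ) ≤ ρ^{−1} C^n n^n (with the convention 0^0 = 1, so the case n = 0 reads p(u) ≤ ρ^{−1}). Then for every n ∈ ℕ, p( t ↦ (d/dt)^n ( t^n u(t) ) ) ≤ ρ^{−1} (C+1)^n n^n. -/

import Mathlib

open Finset
open scoped ContDiff

lemma descFact_succ' (m j : ℕ) :
    m.descFactorial (j + 1) = m * (m - 1).descFactorial j := by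
  cases m with
  | zero => simp
  | succ m => rw [Nat.succ_descFactorial_succ]; simp

lemma seminorm_sum_le' {E : Type*} [AddCommGroup E] [Module ℝ E] (p : Seminorm ℝ E)
    {ι : Type*} (s : Finset ι) (f : ι → E) : p (∑ i ∈ s, f i) ≤ ∑ i ∈ s, p (f i) := by
  classical
  induction s using Finset.cons_induction with
  | empty => simp
  | cons a s ha ih =>
    rw [Finset.sum_cons, Finset.sum_cons]
    exact le_trans (map_add_le_add p _ _) (add_le_add le_rfl ih)

lemma my_itd_add {V : Type*} [NormedAddCommGroup V] [NormedSpace ℝ V]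
    (n : ℕ) (f g : ℝ → V) (hf : ContDiff ℝ ∞ f) (hg : ContDiff ℝ ∞ g) (x : ℝ) :
    iteratedDeriv n (fun t => f t + g t) x = iteratedDeriv n f x + iteratedDeriv n g x := by
  have hn : (n : WithTop ℕ∞) ≤ ∞ := WithTop.coe_le_coe.mpr le_top
  have := iteratedDerivWithin_add (n := n) (Set.mem_univ x) uniqueDiffOn_univ
    (hf.of_le hn).contDiffWithinAt (hg.of_le hn).contDiffWithinAt
  simp only [iteratedDerivWithin_univ] at this
  exact this

lemma my_itd_smul {V : Type*} [NormedAddCommGroup V] [NormedSpace ℝ V]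
    (n : ℕ) (f : ℝ → V) (c : ℝ) (hf : ContDiff ℝ ∞ f) (x : ℝ) :
    iteratedDeriv n (fun t => c • f t) x = c • iteratedDeriv n f x := by
  have hn : (n : WithTop ℕ∞) ≤ ∞ := WithTop.coe_le_coe.mpr le_top
  have := iteratedDerivWithin_const_smul (n := n) (Set.mem_univ x) uniqueDiffOn_univ c
    (hf.of_le hn).contDiffWithinAt
  simpa [iteratedDerivWithin_univ] using this

lemma key_identity {V : Type*} [NormedAddCommGroup V] [NormedSpace ℝ V] :
    ∀ (n m : ℕ) (u : ℝ → V), ContDiff ℝ ∞ u → ∀ t : ℝ,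
    iteratedDeriv n (fun s => s ^ m • u s) t =
      ∑ j ∈ range (n + 1), ((n.choose j * m.descFactorial j : ℕ) : ℝ) •
        (t ^ (m - j) • iteratedDeriv (n - j) u t) := by
  intro n
  induction n with
  | zero => intro m u hu t; simp
  | succ n IH =>
    intro m u hu t
    have hu' : ContDiff ℝ ∞ (deriv u) := (contDiff_infty_iff_deriv.mp hu).2
    have hderiv : deriv (fun s : ℝ => s ^ m • u s) =
        fun s => (m : ℝ) • (s ^ (m - 1) • u s) + s ^ m • deriv u s := by
      funext s
      have h1 : HasDerivAt (fun s : ℝ => s ^ m) ((m : ℝ) * s ^ (m - 1)) s := hasDerivAt_pow m s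
      have h2 : HasDerivAt u (deriv u s) s :=
        ((hu.differentiable (by simp)) s).hasDerivAt
      have : deriv (fun s : ℝ => s ^ m • u s) s = _ := (h1.smul h2).deriv
      rw [this]
      rw [smul_smul] at *
      abel
    rw [iteratedDeriv_succ', hderiv]
    have hsm : ContDiff ℝ ∞ (fun s : ℝ => s ^ (m - 1) • u s) := (contDiff_id.pow _).smul hu
    have hsm2 : ContDiff ℝ ∞ (fun s : ℝ => s ^ m • deriv u s) := (contDiff_id.pow _).smul hu'
    rw [my_itd_add n _ _ ((contDiff_const.smul hsm : ContDiff ℝ ∞ fun s => (m:ℝ) • _)) hsm2 t]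
    rw [my_itd_smul n _ _ hsm t, IH (m - 1) u hu t, IH m (deriv u) hu' t]
    set a : ℕ → V := fun j => ((n.choose j * m.descFactorial j : ℕ) : ℝ) •
      (t ^ (m - j) • iteratedDeriv (n + 1 - j) u t) with ha
    -- rewrite iteratedDeriv (n - j) (deriv u) as iteratedDeriv (n + 1 - j) u
    have hrw : ∀ j ∈ range (n + 1),
        ((n.choose j * m.descFactorial j : ℕ) : ℝ) •
          (t ^ (m - j) • iteratedDeriv (n - j) (deriv u) t) = a j := by
      intro j hj
      have hjn : j ≤ n := Nat.lt_succ_iff.mp (mem_range.mp hj)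
      have e1 : n + 1 - j = (n - j) + 1 := by omega
      rw [ha]; simp only
      rw [e1, iteratedDeriv_succ']
    rw [Finset.sum_congr rfl hrw]
    -- push scalar inside first sum
    rw [Finset.smul_sum]
    have hrw2 : ∀ j ∈ range (n + 1),
        (m : ℝ) • (((n.choose j * (m-1).descFactorial j : ℕ) : ℝ) •
          (t ^ (m - 1 - j) • iteratedDeriv (n - j) u t))
        = ((n.choose j * m.descFactorial (j+1) : ℕ) : ℝ) •
          (t ^ (m - (j+1)) • iteratedDeriv (n + 1 - (j+1)) u t) := by
      intro j hj
      have e1 : m - 1 - j = m - (j + 1) := by omega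
      have e2 : n + 1 - (j + 1) = n - j := by omega
      rw [smul_smul, e1, e2]
      congr 1
      rw [descFact_succ']; push_cast; ring
    rw [Finset.sum_congr rfl hrw2]
    -- now transform RHS
    have hgoal : ∑ j ∈ range (n + 2), (((n+1).choose j * m.descFactorial j : ℕ) : ℝ) •
          (t ^ (m - j) • iteratedDeriv (n + 1 - j) u t)
        = ∑ j ∈ range (n + 1), ((n.choose j * m.descFactorial (j+1) : ℕ) : ℝ) •
            (t ^ (m - (j+1)) • iteratedDeriv (n + 1 - (j+1)) u t)
          + ∑ j ∈ range (n + 1), a j := by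
      rw [Finset.sum_range_succ' (fun j => (((n+1).choose j * m.descFactorial j : ℕ) : ℝ) •
        (t ^ (m - j) • iteratedDeriv (n + 1 - j) u t)) (n+1)]
      have hsplit : ∀ j ∈ range (n + 1),
          (((n+1).choose (j+1) * m.descFactorial (j+1) : ℕ) : ℝ) •
            (t ^ (m - (j+1)) • iteratedDeriv (n + 1 - (j+1)) u t)
          = ((n.choose j * m.descFactorial (j+1) : ℕ) : ℝ) •
              (t ^ (m - (j+1)) • iteratedDeriv (n + 1 - (j+1)) u t) + a (j+1) := by
        intro j hj
        rw [ha]; simp only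
        rw [← add_smul]
        congr 1
        rw [Nat.choose_succ_succ]
        push_cast; ring
      rw [Finset.sum_congr rfl hsplit, Finset.sum_add_distrib]
      have h0 : (((n+1).choose 0 * m.descFactorial 0 : ℕ) : ℝ) •
          (t ^ (m - 0) • iteratedDeriv (n + 1 - 0) u t) = a 0 := by
        rw [ha]; simp
      rw [h0, add_assoc]
      congr 1
      -- ∑_{range(n+1)} a (j+1) + a 0 = ∑_{range (n+1)} a j
      have hz : a (n + 1) = 0 := by
        rw [ha]; simp [Nat.choose_succ_self]
      calc ∑ j ∈ range (n+1), a (j+1) + a 0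
          = ∑ j ∈ range (n+2), a j := (Finset.sum_range_succ' a (n+1)).symm
        _ = ∑ j ∈ range (n+1), a j := by rw [Finset.sum_range_succ, hz, add_zero]
    rw [hgoal]


/-- **Equivalence of Gevrey-type bounds, direction 2.** Let `p` be a seminorm on
the space of functions `ℝ → V` (`V` a real normed vector space) and `u : ℝ → V`
smooth. If `p(tⁿ ∂ₜⁿ u) ≤ ρ⁻¹ Cⁿ nⁿ` for all `n ∈ ℕ` (with `0⁰ = 1`), then
`p(∂ₜⁿ(tⁿ u)) ≤ ρ⁻¹ (C+1)ⁿ nⁿ` for all `n ∈ ℕ`. -/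
theorem gevrey_bound_pow_deriv_to_deriv_pow
    {V : Type*} [NormedAddCommGroup V] [NormedSpace ℝ V]
    (p : Seminorm ℝ (ℝ → V)) (u : ℝ → V) (hu : ContDiff ℝ (⊤ : ℕ∞) u)
    (ρ C : ℝ) (hρ : 0 < ρ) (hC : 0 < C)
    (h : ∀ n : ℕ, p (fun t => t ^ n • iteratedDeriv n u t) ≤
      ρ⁻¹ * C ^ n * (n : ℝ) ^ n) :
    ∀ n : ℕ, p (fun t => iteratedDeriv n (fun s => s ^ n • u s) t) ≤
      ρ⁻¹ * (C + 1) ^ n * (n : ℝ) ^ n := by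
  intro n
  have hu' : ContDiff ℝ ∞ u := hu.of_le (by simp)
  have hfun : (fun t => iteratedDeriv n (fun s => s ^ n • u s) t)
      = ∑ j ∈ range (n + 1), ((n.choose j * n.descFactorial j : ℕ) : ℝ) •
        (fun t : ℝ => t ^ (n - j) • iteratedDeriv (n - j) u t) := by
    funext t
    rw [key_identity n n u hu' t]
    simp [Finset.sum_apply]
  rw [hfun]
  calc p (∑ j ∈ range (n + 1), ((n.choose j * n.descFactorial j : ℕ) : ℝ) •
        (fun t : ℝ => t ^ (n - j) • iteratedDeriv (n - j) u t))
      ≤ ∑ j ∈ range (n + 1), p (((n.choose j * n.descFactorial j : ℕ) : ℝ) •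
        (fun t : ℝ => t ^ (n - j) • iteratedDeriv (n - j) u t)) := seminorm_sum_le' p _ _
    _ = ∑ j ∈ range (n + 1), ((n.choose j * n.descFactorial j : ℕ) : ℝ) *
        p (fun t : ℝ => t ^ (n - j) • iteratedDeriv (n - j) u t) := by
        refine Finset.sum_congr rfl fun j _ => ?_
        rw [map_smul_eq_mul]
        congr 1
        simp
    _ ≤ ∑ j ∈ range (n + 1), ((n.choose j * n.descFactorial j : ℕ) : ℝ) *
        (ρ⁻¹ * C ^ (n - j) * ((n - j : ℕ) : ℝ) ^ (n - j)) := by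
        refine Finset.sum_le_sum fun j _ => ?_
        exact mul_le_mul_of_nonneg_left (h (n - j)) (by positivity)
    _ ≤ ∑ j ∈ range (n + 1), ρ⁻¹ * ((n.choose j : ℝ) * C ^ (n - j)) * (n : ℝ) ^ n := by
        refine Finset.sum_le_sum fun j hj => ?_
        have hjn : j ≤ n := Nat.lt_succ_iff.mp (mem_range.mp hj)
        have h1 : ((n.descFactorial j : ℕ) : ℝ) ≤ (n : ℝ) ^ j := by
          exact_mod_cast Nat.cast_le.mpr (Nat.descFactorial_le_pow n j)
        have h2 : ((n - j : ℕ) : ℝ) ^ (n - j) ≤ (n : ℝ) ^ (n - j) := by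
          apply pow_le_pow_left₀ (by positivity)
          exact_mod_cast Nat.cast_le.mpr (Nat.sub_le n j)
        calc ((n.choose j * n.descFactorial j : ℕ) : ℝ) *
              (ρ⁻¹ * C ^ (n - j) * ((n - j : ℕ) : ℝ) ^ (n - j))
            = ρ⁻¹ * ((n.choose j : ℝ) * C ^ (n - j)) *
              ((n.descFactorial j : ℝ) * ((n - j : ℕ) : ℝ) ^ (n - j)) := by push_cast; ring
          _ ≤ ρ⁻¹ * ((n.choose j : ℝ) * C ^ (n - j)) * ((n : ℝ) ^ j * (n : ℝ) ^ (n - j)) := by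
              have hpref : (0:ℝ) ≤ ρ⁻¹ * ((n.choose j : ℝ) * C ^ (n - j)) := by positivity
              apply mul_le_mul_of_nonneg_left _ hpref
              apply mul_le_mul h1 h2 (by positivity) (by positivity)
          _ = ρ⁻¹ * ((n.choose j : ℝ) * C ^ (n - j)) * (n : ℝ) ^ n := by
              rw [← pow_add]
              congr 2
              omega
    _ = ρ⁻¹ * (C + 1) ^ n * (n : ℝ) ^ n := by
        rw [← Finset.sum_mul, ← Finset.mul_sum]
        congr 2
        rw [add_comm C 1, add_pow]
        refine Finset.sum_congr rfl fun j hj => ?_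
        simp [mul_comm]
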